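/- For ψ ∈ {1, −1}, ∫_ℝ e^{−rT}·S_T(z)·1{ψ·(S_T(z) − K) > 0}·φ(z) dz = S₀·e^{−qT}·Φ(ψd₁). -/

import Mathlib

/-!
Write `S_T(z) = S₀ e^{m + a z}` with `a = σ√T`. Multiplying the Gaussian density by `e^{a z}`
shifts it: `e^{a z} φ(z) = e^{a²/2} φ(z - a)`. After the substitution `z = w + a` the discount,
drift and tilt factors combine to `e^{-qT}`, and the exercise region `ψ (S_T - K) > 0` becomes
the half-line `ψ (w + d₁) > 0`, whose Gaussian mass is `Φ(ψ d₁)` by the symmetry of `φ`.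
-/

open MeasureTheory

/-- The standard normal density. -/
noncomputable def gaussPDF (z : ℝ) : ℝ := (Real.sqrt (2 * Real.pi))⁻¹ * Real.exp (-z ^ 2 / 2)

/-- The standard normal cumulative distribution function. -/
noncomputable def gaussCDF (x : ℝ) : ℝ := ∫ z in Set.Iic x, gaussPDF z

lemma gaussPDF_neg (z : ℝ) : gaussPDF (-z) = gaussPDF z := by
  simp only [gaussPDF, even_two, Even.neg_pow]

lemma exp_mul_mul_gaussPDF (a z : ℝ) :
    Real.exp (a * z) * gaussPDF z = Real.exp (a ^ 2 / 2) * gaussPDF (z - a) := by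
  simp only [gaussPDF]
  rw [mul_left_comm, mul_left_comm (Real.exp _), ← Real.exp_add, ← Real.exp_add]
  ring_nf

lemma integral_exp_mul_mul_gaussPDF (a : ℝ) (f : ℝ → ℝ) :
    ∫ z, Real.exp (a * z) * f z * gaussPDF z =
      Real.exp (a ^ 2 / 2) * ∫ w, f (w + a) * gaussPDF w := by
  calc ∫ z, Real.exp (a * z) * f z * gaussPDF z
      = ∫ z, Real.exp (a ^ 2 / 2) * (f (z - a + a) * gaussPDF (z - a)) := by
        congr with z
        rw [sub_add_cancel, mul_right_comm, exp_mul_mul_gaussPDF]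
        ring
    _ = Real.exp (a ^ 2 / 2) * ∫ w, f (w + a) * gaussPDF w := by
        rw [integral_const_mul, integral_sub_right_eq_self (fun w ↦ f (w + a) * gaussPDF w) a]

lemma integral_Ioi_neg_gaussPDF (x : ℝ) : ∫ z in Set.Ioi (-x), gaussPDF z = gaussCDF x := by
  simpa [gaussPDF_neg, gaussCDF] using (integral_comp_neg_Iic x gaussPDF).symm

lemma integral_Iio_gaussPDF (x : ℝ) : ∫ z in Set.Iio x, gaussPDF z = gaussCDF x :=
  integral_Iic_eq_integral_Iio.symm

lemma integral_ite_pos_mul_add_mul_gaussPDF {ψ : ℝ} (hψ : ψ = 1 ∨ ψ = -1) (d : ℝ) :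
    ∫ w, (if 0 < ψ * (w + d) then (1 : ℝ) else 0) * gaussPDF w = gaussCDF (ψ * d) := by
  rcases hψ with rfl | rfl
  · rw [one_mul, ← integral_Ioi_neg_gaussPDF, ← integral_indicator measurableSet_Ioi]
    congr with w
    simp [Set.indicator, neg_lt_iff_pos_add]
  · rw [← integral_Iio_gaussPDF, ← integral_indicator measurableSet_Iio]
    congr with w
    simp [Set.indicator]

lemma pos_mul_mul_exp_sub_iff {ψ S K x : ℝ} (hS : 0 < S) (hK : 0 < K) :
    0 < ψ * (S * Real.exp x - K) ↔ 0 < ψ * (x + Real.log (S / K)) := by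
  set y := x + Real.log (S / K)
  have hdiff : S * Real.exp x - K = K * (Real.exp y - 1) := by
    rw [Real.exp_add, Real.exp_log (div_pos hS hK)]
    field_simp
  rw [hdiff, mul_left_comm, mul_pos_iff_of_pos_left hK, mul_pos_iff, mul_pos_iff, sub_pos,
    sub_neg, Real.one_lt_exp_iff, Real.exp_lt_one_iff]

/-- The conditional price of an asset-or-nothing option (`ψ = 1` call, `ψ = -1` put). -/
theorem stmt_9 (S₀ K T σ : ℝ) (r q : ℝ) (hS : 0 < S₀) (hK : 0 < K) (hT : 0 < T)
    (hσ : 0 < σ) (ψ : ℝ) (hψ : ψ = 1 ∨ ψ = -1) :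
    (∫ z : ℝ, Real.exp (-r * T)
        * (S₀ * Real.exp ((r - q - σ ^ 2 / 2) * T + σ * Real.sqrt T * z))
        * (if 0 < ψ * (S₀ * Real.exp ((r - q - σ ^ 2 / 2) * T + σ * Real.sqrt T * z) - K)
            then (1 : ℝ) else 0)
        * gaussPDF z)
      = S₀ * Real.exp (-q * T)
          * gaussCDF (ψ * ((Real.log (S₀ / K) + (r - q + σ ^ 2 / 2) * T)
              / (σ * Real.sqrt T))) := by
  set a := σ * Real.sqrt T
  set m := (r - q - σ ^ 2 / 2) * T
  set d := (Real.log (S₀ / K) + (r - q + σ ^ 2 / 2) * T) / a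
  have ha : 0 < a := by positivity
  have ha2 : a ^ 2 = σ ^ 2 * T := by rw [mul_pow, Real.sq_sqrt hT.le]
  have hdiscount : Real.exp (-r * T) * S₀ * Real.exp m * Real.exp (a ^ 2 / 2)
      = S₀ * Real.exp (-q * T) := by
    have hrate : -r * T + m + a ^ 2 / 2 = -q * T := by
      rw [ha2]
      ring
    rw [← hrate, Real.exp_add, Real.exp_add]
    ring
  have hstrike (w : ℝ) :
      0 < ψ * (S₀ * Real.exp (m + a * (w + a)) - K) ↔ 0 < ψ * (w + d) := by
    have hlog : m + a * (w + a) + Real.log (S₀ / K) = a * (w + d) := by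
      simp only [d]
      field_simp
      linear_combination 2 * σ ^ 2 * Real.sq_sqrt hT.le
    rw [pos_mul_mul_exp_sub_iff hS hK, hlog, mul_left_comm, mul_pos_iff_of_pos_left ha]
  calc _ = ∫ z, Real.exp (-r * T) * S₀ * Real.exp m * (Real.exp (a * z)
          * (if 0 < ψ * (S₀ * Real.exp (m + a * z) - K) then (1 : ℝ) else 0) * gaussPDF z) := by
        congr with z
        rw [Real.exp_add]
        ring
    _ = Real.exp (-r * T) * S₀ * Real.exp m * Real.exp (a ^ 2 / 2)
          * ∫ w, (if 0 < ψ * (w + d) then (1 : ℝ) else 0) * gaussPDF w := by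
        rw [integral_const_mul, integral_exp_mul_mul_gaussPDF]
        simp only [hstrike]
        ring
    _ = _ := by rw [hdiscount, integral_ite_pos_mul_add_mul_gaussPDF hψ]
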